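/- arXiv:2204.10503 — 15 statements merged into one kernel-verified Lean document; each statement's English description precedes it below -/
import Mathlib

section
/- The group semiring S[Q₈], where S = ℚ≥0 is the semiring of non-negative rational numbers and Q₈ is the quaternion group of order 8 (with generators a, b and relations a⁴ = 1, a² = b², aba⁻¹ = b⁻¹), is a centrally essential semiring: for every non-zero element x of S[Q₈] there exist non-zero central elements y, z of S[Q₈] with xy = z. -/
open MonoidAlgebra Finset

noncomputable def Y : MonoidAlgebra NNRat (QuaternionGroup 2) :=
  ∑ g : QuaternionGroup 2, MonoidAlgebra.single g 1

lemma single_mul_Y (g : QuaternionGroup 2) :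
    MonoidAlgebra.single g (1:NNRat) * Y = Y := by
  unfold Y
  rw [Finset.mul_sum]
  refine Fintype.sum_equiv (Equiv.mulLeft g) _ _ fun h => ?_
  simp [MonoidAlgebra.single_mul_single]

lemma Y_mul_single (g : QuaternionGroup 2) :
    Y * MonoidAlgebra.single g (1:NNRat) = Y := by
  unfold Y
  rw [Finset.sum_mul]
  refine Fintype.sum_equiv (Equiv.mulRight g) _ _ fun h => ?_
  simp [MonoidAlgebra.single_mul_single]

lemma Y_central (s : MonoidAlgebra NNRat (QuaternionGroup 2)) : Y * s = s * Y := by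
  induction s using MonoidAlgebra.induction_on with
  | of g => rw [MonoidAlgebra.of_apply, Y_mul_single, single_mul_Y]
  | add a b ha hb => rw [mul_add, add_mul, ha, hb]
  | smul c a ha => rw [mul_smul_comm, smul_mul_assoc, ha]

lemma X_mul_Y (x : MonoidAlgebra NNRat (QuaternionGroup 2)) :
    x * Y = (∑ g : QuaternionGroup 2, x.coeff g) • Y := by
  conv_lhs => rw [← MonoidAlgebra.sum_coeff_single x]
  rw [Finsupp.sum, Finset.sum_mul, Finset.sum_smul]
  rw [← Finset.sum_subset (Finset.subset_univ x.coeff.support)]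
  · refine Finset.sum_congr rfl fun g _ => ?_
    have : (MonoidAlgebra.single g (x.coeff g) : MonoidAlgebra NNRat (QuaternionGroup 2))
        = x.coeff g • MonoidAlgebra.single g 1 := by
        rw [MonoidAlgebra.smul_single', mul_one]
    rw [this, smul_mul_assoc, single_mul_Y]
  · intro g _ hg
    simp [Finsupp.notMem_support_iff.mp hg]

lemma Y_one : Y.coeff 1 = 1 := by
  unfold Y
  rw [MonoidAlgebra.coeff_sum, Finset.sum_apply']
  rw [Finset.sum_eq_single (1 : QuaternionGroup 2)] <;> simp +contextual [Finsupp.single_apply, eq_comm]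

/-- The group semiring `ℚ≥0[Q₈]` is centrally essential. -/
theorem stmt_0 :
    ∀ x : MonoidAlgebra NNRat (QuaternionGroup 2), x ≠ 0 →
      ∃ y z : MonoidAlgebra NNRat (QuaternionGroup 2),
        y ≠ 0 ∧ z ≠ 0 ∧
        (∀ s, y * s = s * y) ∧ (∀ s, z * s = s * z) ∧ x * y = z := by
  intro x hx
  set c : NNRat := ∑ g : QuaternionGroup 2, x.coeff g with hc
  have hcne : c ≠ 0 := by
    intro h
    apply hx
    ext g
    have := (Finset.sum_eq_zero_iff).mp h g (Finset.mem_univ g)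
    simpa using this
  have hYne : Y ≠ 0 := by
    intro h
    have := Y_one
    rw [h] at this
    simp at this
  refine ⟨Y, c • Y, hYne, ?_, Y_central, ?_, ?_⟩
  · intro h
    have : (c • Y).coeff 1 = 0 := by rw [h]; rfl
    rw [MonoidAlgebra.coeff_smul, Finsupp.smul_apply, Y_one, smul_eq_mul, mul_one] at this
    exact hcne this
  · intro s
    rw [smul_mul_assoc, mul_smul_comm, Y_central]
  · exact X_mul_Y x
end

section
/- The group semiring S[Q₈], where S = ℚ≥0 is the semiring of non-negative rational numbers and Q₈ is the quaternion group of order 8, is a reduced semiring: for all x, y ∈ S[Q₈], if x² + y² = xy + yx then x = y. -/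
open QuaternionGroup

/-- Build a monoid hom from `QuaternionGroup 2` given suitable `u`, `v` in a monoid. -/
def qhom {M : Type*} [Monoid M] (u v : M) (hu : u ^ 4 = 1) (hv : v * v = u ^ 2)
    (huv : u * v = v * u ^ 3) : QuaternionGroup 2 →* M where
  toFun g := match g with
    | .a i => u ^ i.val
    | .xa i => v * u ^ i.val
  map_one' := by
    show u ^ (0 : ZMod (2*2)).val = 1
    norm_num
  map_mul' := by
    have key : ∀ m : ℕ, u ^ (m % 4) = u ^ m := by
      intro m
      conv_rhs => rw [← Nat.div_add_mod m 4, pow_add, pow_mul, hu, one_pow, one_mul]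
    have swap : ∀ m : ℕ, u ^ m * v = v * u ^ (3 * m) := by
      intro m
      induction m with
      | zero => simp
      | succ k ih =>
          rw [pow_succ, mul_assoc, huv, ← mul_assoc, ih, mul_assoc, ← pow_add]
          ring_nf
    have h1 : ∀ i j : ZMod (2*2), (i + j).val = (i.val + j.val) % 4 := by decide
    have h2 : ∀ i j : ZMod (2*2), (j - i).val = (3 * i.val + j.val) % 4 := by decide
    have h3 : ∀ i j : ZMod (2*2),
        (((2:ℕ) : ZMod (2*2)) + j - i).val = (2 + (3 * i.val + j.val)) % 4 := by decide
    rintro (i | i) (j | j)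
    · show u ^ (i + j).val = u ^ i.val * u ^ j.val
      rw [h1, key, pow_add]
    · show v * u ^ (j - i).val = u ^ i.val * (v * u ^ j.val)
      rw [h2, key, ← mul_assoc, swap, mul_assoc, ← pow_add]
    · show v * u ^ (i + j).val = v * u ^ i.val * u ^ j.val
      rw [h1, key, mul_assoc, ← pow_add]
    · show u ^ (((2:ℕ) : ZMod (2*2)) + j - i).val = v * u ^ i.val * (v * u ^ j.val)
      rw [h3, key, mul_assoc, ← mul_assoc (u ^ i.val), swap, ← mul_assoc, ← mul_assoc, hv,
        mul_assoc, ← pow_add, ← pow_add]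

@[simp] lemma qhom_a {M : Type*} [Monoid M] (u v : M) (hu : u ^ 4 = 1) (hv : v * v = u ^ 2)
    (huv : u * v = v * u ^ 3) (i : ZMod (2*2)) : qhom u v hu hv huv (a i) = u ^ i.val := rfl

@[simp] lemma qhom_xa {M : Type*} [Monoid M] (u v : M) (hu : u ^ 4 = 1) (hv : v * v = u ^ 2)
    (huv : u * v = v * u ^ 3) (i : ZMod (2*2)) : qhom u v hu hv huv (xa i) = v * u ^ i.val := rfl

/-- Explicit equivalence used to expand sums over `QuaternionGroup 2`. -/
def qEquiv : (ZMod (2*2) ⊕ ZMod (2*2)) ≃ QuaternionGroup 2 where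
  toFun := Sum.elim a xa
  invFun g := match g with | .a i => .inl i | .xa i => .inr i
  left_inv := by rintro (i|i) <;> rfl
  right_inv := by rintro (i|i) <;> rfl

theorem qsum {M : Type*} [AddCommMonoid M] (f : QuaternionGroup 2 → M) :
    ∑ g, f g = (f (a 0) + f (a 1) + f (a 2) + f (a 3))
      + (f (xa 0) + f (xa 1) + f (xa 2) + f (xa 3)) := by
  rw [← Equiv.sum_comp qEquiv f, Fintype.sum_sum_type]
  show (∑ i : Fin 4, f (a i)) + (∑ i : Fin 4, f (xa i)) = _
  rw [Fin.sum_univ_four, Fin.sum_univ_four]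
  rfl

/-- Quaternion with given components, typed as `Quaternion ℚ`. -/
def qmk (r i j k : ℚ) : Quaternion ℚ := ⟨r, i, j, k⟩

@[simp] lemma qmk_re (r i j k : ℚ) : (qmk r i j k).re = r := rfl
@[simp] lemma qmk_imI (r i j k : ℚ) : (qmk r i j k).imI = i := rfl
@[simp] lemma qmk_imJ (r i j k : ℚ) : (qmk r i j k).imJ = j := rfl
@[simp] lemma qmk_imK (r i j k : ℚ) : (qmk r i j k).imK = k := rfl

set_option maxHeartbeats 1000000

/-- The group semiring `ℚ≥0[Q₈]` is reduced. -/
theorem stmt_2 :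
    ∀ x y : MonoidAlgebra NNRat (QuaternionGroup 2),
      x ^ 2 + y ^ 2 = x * y + y * x → x = y := by
  intro x y h
  have key : ∀ {A : Type} [DivisionRing A] [Algebra NNRat A] (F : QuaternionGroup 2 →* A),
      ∑ g, x.coeff g • F g = ∑ g, y.coeff g • F g := by
    intro A _ _ F
    set φ := MonoidAlgebra.lift NNRat A (QuaternionGroup 2) F with hφ
    have heval : ∀ z : MonoidAlgebra NNRat (QuaternionGroup 2), φ z = ∑ g, z.coeff g • F g := by
      intro z
      rw [hφ, MonoidAlgebra.lift_apply]
      exact Finsupp.sum_fintype _ _ (fun g => zero_smul _ _)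
    have hh := congrArg φ h
    simp only [map_add, map_mul, map_pow] at hh
    have h2 : φ x * φ x + φ y * φ y = φ x * φ y + φ y * φ x := by simpa [sq] using hh
    have h3 : (φ x - φ y) * (φ x - φ y) = 0 := by
      have : (φ x - φ y) * (φ x - φ y) = (φ x * φ x + φ y * φ y) - (φ x * φ y + φ y * φ x) := by
        noncomm_ring
      rw [this, h2, sub_self]
    have h4 : φ x = φ y := sub_eq_zero.mp (mul_self_eq_zero.mp h3)
    rw [heval, heval] at h4
    exact h4
  have cq := key (A := Quaternion ℚ) (qhom (qmk 0 1 0 0) (qmk 0 0 1 0)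
    (by ext <;> simp [pow_succ, Quaternion.re_one, Quaternion.imI_one, Quaternion.imJ_one, Quaternion.imK_one])
    (by ext <;> simp [pow_succ])
    (by ext <;> simp [pow_succ]))
  rw [qsum, qsum] at cq
  have v0 : (0 : ZMod (2*2)).val = 0 := rfl
  have v1 : (1 : ZMod (2*2)).val = 1 := rfl
  have v2 : (2 : ZMod (2*2)).val = 2 := rfl
  have v3 : (3 : ZMod (2*2)).val = 3 := rfl
  simp only [qhom_a, qhom_xa, v0, v1, v2, v3] at cq
  have e1 : qmk 0 1 0 0 ^ 0 = qmk 1 0 0 0 := by ext <;> simp [Quaternion.re_one, Quaternion.imI_one, Quaternion.imJ_one, Quaternion.imK_one]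
  have e2 : qmk 0 1 0 0 ^ 1 = qmk 0 1 0 0 := by ext <;> simp
  have e3 : qmk 0 1 0 0 ^ 2 = qmk (-1) 0 0 0 := by ext <;> simp [pow_succ]
  have e4 : qmk 0 1 0 0 ^ 3 = qmk 0 (-1) 0 0 := by ext <;> simp [pow_succ]
  rw [e1, e2, e3, e4] at cq
  have f1 : qmk 0 0 1 0 * qmk 1 0 0 0 = qmk 0 0 1 0 := by ext <;> simp
  have f2 : qmk 0 0 1 0 * qmk 0 1 0 0 = qmk 0 0 0 (-1) := by ext <;> simp
  have f3 : qmk 0 0 1 0 * qmk (-1) 0 0 0 = qmk 0 0 (-1) 0 := by ext <;> simp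
  have f4 : qmk 0 0 1 0 * qmk 0 (-1) 0 0 = qmk 0 0 0 1 := by ext <;> simp
  rw [f1, f2, f3, f4] at cq
  have eqr := congrArg QuaternionAlgebra.re cq
  have eqi := congrArg QuaternionAlgebra.imI cq
  have eqj := congrArg QuaternionAlgebra.imJ cq
  have eqk := congrArg QuaternionAlgebra.imK cq
  simp only [Quaternion.re_add, Quaternion.imI_add, Quaternion.imJ_add, Quaternion.imK_add,
    Quaternion.re_smul, Quaternion.imI_smul, Quaternion.imJ_smul, Quaternion.imK_smul]
    at eqr eqi eqj eqk
  simp only [qmk_re, qmk_imI, qmk_imJ, qmk_imK, NNRat.smul_def, mul_one, mul_zero, mul_neg, add_zero, zero_add, neg_zero]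
    at eqr eqi eqj eqk
  have c11 := key (qhom (1:ℚ) 1 (by norm_num) (by norm_num) (by norm_num))
  have c12 := key (qhom (1:ℚ) (-1) (by norm_num) (by norm_num) (by norm_num))
  have c21 := key (qhom (-1:ℚ) 1 (by norm_num) (by norm_num) (by norm_num))
  have c22 := key (qhom (-1:ℚ) (-1) (by norm_num) (by norm_num) (by norm_num))
  rw [qsum, qsum] at c11 c12 c21 c22
  simp only [qhom_a, qhom_xa, v0, v1, v2, v3, pow_zero, pow_one, NNRat.smul_def,
    mul_one, mul_neg, neg_neg, neg_one_sq, one_pow] at c11 c12 c21 c22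
  norm_num [-QuaternionGroup.a_zero] at c11 c12 c21 c22
  have goal : ∀ g : QuaternionGroup 2, x.coeff g = y.coeff g := by
    have hz : ∀ i : ZMod (2*2), i = 0 ∨ i = 1 ∨ i = 2 ∨ i = 3 := by decide
    have cast_inj : ∀ p q : NNRat, (p : ℚ) = (q : ℚ) → p = q := fun p q hpq => by
      exact_mod_cast hpq
    rintro (i | i) <;> rcases hz i with rfl | rfl | rfl | rfl <;>
      refine cast_inj _ _ ?_
    · linear_combination c11/8 + c12/8 + c21/8 + c22/8 + eqr/2
    · linear_combination c11/8 + c12/8 - c21/8 - c22/8 + eqi/2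
    · linear_combination c11/8 + c12/8 + c21/8 + c22/8 - eqr/2
    · linear_combination c11/8 + c12/8 - c21/8 - c22/8 - eqi/2
    · linear_combination c11/8 - c12/8 + c21/8 - c22/8 + eqj/2
    · linear_combination c11/8 - c12/8 - c21/8 + c22/8 - eqk/2
    · linear_combination c11/8 - c12/8 + c21/8 - c22/8 - eqj/2
    · linear_combination c11/8 - c12/8 - c21/8 + c22/8 + eqk/2
  exact MonoidAlgebra.coeff_injective (Finsupp.ext goal)
end

section
/- The rational group algebra ℚ[Q₈] of the quaternion group Q₈ of order 8 is not a centrally essential ring: it is not the case that for every non-zero x ∈ ℚ[Q₈] there exist non-zero central elements y, z with xy = z. -/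
open MonoidAlgebra QuaternionGroup

/-- The rational group algebra `ℚ[Q₈]` is not a centrally essential ring. -/
theorem stmt_4 :
    ¬ (∀ x : MonoidAlgebra ℚ (QuaternionGroup 2), x ≠ 0 →
        ∃ y z : MonoidAlgebra ℚ (QuaternionGroup 2),
          y ≠ 0 ∧ z ≠ 0 ∧
          (∀ s, y * s = s * y) ∧ (∀ s, z * s = s * z) ∧ x * y = z) := by
  intro h
  set X : MonoidAlgebra ℚ (QuaternionGroup 2) :=
    MonoidAlgebra.single (a 1) 1 - MonoidAlgebra.single (a 3) 1 with hX
  have hXne : X ≠ 0 := by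
    intro h0
    have this : X.coeff (a 1) = 0 := by rw [h0]; rfl
    rw [hX, MonoidAlgebra.coeff_sub, Finsupp.sub_apply, MonoidAlgebra.coeff_single, MonoidAlgebra.coeff_single, Finsupp.single_apply, Finsupp.single_apply] at this
    rw [if_pos rfl, if_neg (show ¬ ((a 3 : QuaternionGroup 2) = a 1) from by decide)] at this
    norm_num at this
  obtain ⟨y, z, hy, hz, hyc, hzc, hxyz⟩ := h X hXne
  set B : MonoidAlgebra ℚ (QuaternionGroup 2) := MonoidAlgebra.single (xa 0) 1 with hB
  have hXB : X * B = - (B * X) := by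
    simp only [hX, hB, sub_mul, mul_sub, MonoidAlgebra.single_mul_single, one_mul]
    rw [show (a 1 * xa 0 : QuaternionGroup 2) = xa 3 by decide,
        show (a 3 * xa 0 : QuaternionGroup 2) = xa 1 by decide,
        show (xa 0 * a 1 : QuaternionGroup 2) = xa 1 by decide,
        show (xa 0 * a 3 : QuaternionGroup 2) = xa 3 by decide]
    rw [neg_sub]
  have key : B * z = 0 := by
    have h1 : z * B = B * z := hzc B
    have h2 : z * B = - (B * z) := by
      calc z * B = X * (y * B) := by rw [← hxyz, mul_assoc]
        _ = X * (B * y) := by rw [hyc B]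
        _ = (X * B) * y := by rw [mul_assoc]
        _ = -(B * X) * y := by rw [hXB]
        _ = -(B * (X * y)) := by rw [neg_mul, mul_assoc]
        _ = -(B * z) := by rw [hxyz]
    have h3 : B * z = -(B * z) := h1.symm.trans h2
    have h4 : (2 : ℚ) • (B * z) = 0 := by
      rw [two_smul]
      nth_rewrite 1 [h3]
      rw [neg_add_cancel]
    exact (smul_eq_zero.mp h4).resolve_left two_ne_zero
  have hBinv : (MonoidAlgebra.single (xa 0)⁻¹ (1:ℚ)) * B = 1 := by
    rw [hB, MonoidAlgebra.single_mul_single, inv_mul_cancel, one_mul, MonoidAlgebra.one_def]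
  have : z = 0 := by
    calc z = (MonoidAlgebra.single (xa 0)⁻¹ (1:ℚ) * B) * z := by rw [hBinv, one_mul]
      _ = MonoidAlgebra.single (xa 0)⁻¹ (1:ℚ) * (B * z) := by rw [mul_assoc]
      _ = 0 := by rw [key, mul_zero]
  exact hz this
end

section
/- Let S be an additively cancellative reduced semiring, let R be a ring, and let f : S → R be an injective semiring homomorphism such that every element of R is of the form f(x) − f(y) for some x, y ∈ S (i.e., R is a ring of differences of S). Then S is commutative if and only if R is a centrally essential ring. -/
/-- If `S` is an additively cancellative reduced semiring and `R` is a ring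
of differences of `S` (via an injective semiring hom `f` with `R = f(S) - f(S)`), then
`S` is commutative iff `R` is centrally essential. -/
theorem stmt_5 {S R : Type*} [Semiring S] [Ring R] (f : S →+* R)
    (hcanc : ∀ x y z : S, x + z = y + z → x = y)
    (hred : ∀ x y : S, x ^ 2 + y ^ 2 = x * y + y * x → x = y)
    (hinj : Function.Injective f)
    (hdiff : ∀ r : R, ∃ x y : S, r = f x - f y) :
    (∀ a b : S, a * b = b * a) ↔
      (∀ r : R, r ≠ 0 → ∃ y z : R, y ≠ 0 ∧ z ≠ 0 ∧
        (∀ s, y * s = s * y) ∧ (∀ s, z * s = s * z) ∧ r * y = z) := by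
  constructor
  · -- S commutative ⇒ R centrally essential
    intro hcomm
    have hkey : ∀ a b : S, f a * f b = f b * f a := fun a b => by
      rw [← map_mul, ← map_mul, hcomm]
    have hRcomm : ∀ p q : R, p * q = q * p := by
      intro p q
      obtain ⟨x, y, rfl⟩ := hdiff p
      obtain ⟨u, v, rfl⟩ := hdiff q
      simp only [sub_mul, mul_sub]
      rw [hkey x u, hkey x v, hkey y u, hkey y v]
      abel
    intro r hr
    refine ⟨1, r, ?_, hr, fun s => by rw [one_mul, mul_one],
      fun s => hRcomm r s, mul_one r⟩
    intro h1
    exact hr (by rw [← mul_one r, h1, mul_zero])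
  · -- R centrally essential ⇒ S commutative
    intro hce a b
    -- R is reduced
    have hredR : ∀ r : R, r * r = 0 → r = 0 := by
      intro r h
      obtain ⟨x, y, rfl⟩ := hdiff r
      have e : f x * f x + f y * f y - (f x * f y + f y * f x)
          = (f x - f y) * (f x - f y) := by noncomm_ring
      have h2 : f x * f x + f y * f y = f x * f y + f y * f x :=
        sub_eq_zero.mp (e.trans h)
      have h3 : x * x + y * y = x * y + y * x := by
        apply hinj
        rw [map_add, map_add, map_mul, map_mul, map_mul, map_mul]
        exact h2
      have hxy : x = y := hred x y (by rw [pow_two, pow_two]; exact h3)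
      rw [hxy, sub_self]
    -- R is commutative
    have hcommR : ∀ p q : R, p * q = q * p := by
      intro p q
      by_contra hd0
      have hd : p * q - q * p ≠ 0 := sub_ne_zero.mpr hd0
      obtain ⟨y1, z1, hy1, hz1, hy1c, hz1c, h1⟩ := hce _ hd
      set c := q * y1 with hc
      have hpc : p * c - c * p = z1 := by
        rw [← h1, hc, sub_mul, mul_assoc, mul_assoc, mul_assoc, hy1c p]
      have hpz : p * z1 ≠ 0 := by
        intro h0
        apply hz1
        apply hredR
        have e0 : z1 * z1 = (p * c - c * p) * z1 := by rw [hpc]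
        rw [e0, sub_mul, mul_assoc p c z1, ← hz1c c, ← mul_assoc, h0,
          zero_mul, mul_assoc c p z1, h0, mul_zero, sub_zero]
      obtain ⟨y2, z2, hy2, hz2, hy2c, hz2c, h2⟩ := hce _ hpz
      -- the product of the central elements z1 and y2 is central
      have hz1y2c : ∀ s : R, (z1 * y2) * s = s * (z1 * y2) := fun s => by
        rw [mul_assoc, hy2c s, ← mul_assoc, hz1c s, mul_assoc]
      have hcen : p * z1 * y2 * c = c * (p * z1 * y2) := by
        rw [h2]; exact hz2c c
      have e1 : p * c * (z1 * y2) = c * p * (z1 * y2) := by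
        calc p * c * (z1 * y2) = p * (c * (z1 * y2)) := by noncomm_ring
          _ = p * ((z1 * y2) * c) := by rw [hz1y2c c]
          _ = p * z1 * y2 * c := by noncomm_ring
          _ = c * (p * z1 * y2) := hcen
          _ = c * p * (z1 * y2) := by noncomm_ring
      have key : z1 * (z1 * y2) = 0 := by
        have h0 : (p * c - c * p) * (z1 * y2) = 0 := by
          rw [sub_mul, e1, sub_self]
        rw [hpc] at h0; exact h0
      have hz1y2 : z1 * y2 = 0 := by
        apply hredR
        calc (z1 * y2) * (z1 * y2) = z1 * (y2 * (z1 * y2)) := by noncomm_ring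
          _ = z1 * ((z1 * y2) * y2) := by rw [hz1y2c y2]
          _ = (z1 * (z1 * y2)) * y2 := by noncomm_ring
          _ = 0 := by rw [key, zero_mul]
      exact hz2 (by rw [← h2, mul_assoc, hz1y2, mul_zero])
    have hfab := hcommR (f a) (f b)
    rw [← map_mul, ← map_mul] at hfab
    exact hinj hfab
end

section
/- Let S be an additively cancellative reduced semiring, let R be a ring, and let f : S → R be an injective semiring homomorphism such that every element of R is of the form f(x) − f(y) for some x, y ∈ S. Then the ring R is reduced: for every a ∈ R, a² = 0 implies a = 0. -/
/-- If `S` is an additively cancellative reduced semiring and `R` is a ring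
of differences of `S`, then `R` is reduced. -/
theorem stmt_6 {S R : Type*} [Semiring S] [Ring R] (f : S →+* R)
    (hcanc : ∀ x y z : S, x + z = y + z → x = y)
    (hred : ∀ x y : S, x ^ 2 + y ^ 2 = x * y + y * x → x = y)
    (hinj : Function.Injective f)
    (hdiff : ∀ r : R, ∃ x y : S, r = f x - f y) :
    ∀ a : R, a ^ 2 = 0 → a = 0 := by
  intro a ha
  obtain ⟨x, y, rfl⟩ := hdiff a
  have h : f (x ^ 2 + y ^ 2) = f (x * y + y * x) := by
    simp only [map_add, map_mul, map_pow]
    have e : (f x - f y) ^ 2 = f x ^ 2 + f y ^ 2 - (f x * f y + f y * f x) := by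
      noncomm_ring
    have := sub_eq_zero.mp (e ▸ ha)
    exact this
  have := hred x y (hinj h)
  rw [this, sub_self]
end

section
/- Let S be an additively cancellative, semisubtractive, centrally essential semiring that has no non-zero nilpotent elements (i.e., for every x ∈ S and every positive integer n, xⁿ = 0 implies x = 0). Then S is commutative. -/
/-- An additively cancellative, semisubtractive, centrally essential semiring
without non-zero nilpotent elements is commutative. -/
theorem stmt_7 {S : Type*} [Semiring S]
    (hcanc : ∀ x y z : S, x + z = y + z → x = y)
    (hsub : ∀ a b : S, a ≠ b → ∃ x : S, a + x = b ∨ b + x = a)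
    (hce : ∀ x : S, x ≠ 0 → ∃ y z : S, y ≠ 0 ∧ z ≠ 0 ∧
      (∀ s, y * s = s * y) ∧ (∀ s, z * s = s * z) ∧ x * y = z)
    (hnil : ∀ (x : S) (n : ℕ), 0 < n → x ^ n = 0 → x = 0) :
    ∀ a b : S, a * b = b * a := by
  have key : ∀ a b x : S, b * a + x = a * b → x = 0 := by
    intro a b x hx
    by_contra hx0
    obtain ⟨y, z, hy0, hz0, hy, hz, hxy⟩ := hce x hx0
    -- b₁ := b * y  satisfies  b₁ * a + z = a * b₁
    have h1 : (b * y) * a + z = a * (b * y) := by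
      have h := congrArg (· * y) hx
      simp only [add_mul] at h
      calc (b * y) * a + z = b * (y * a) + x * y := by rw [mul_assoc, hxy]
        _ = b * a * y + x * y := by rw [hy a, ← mul_assoc]
        _ = a * b * y := h
        _ = a * (b * y) := by rw [mul_assoc]
    -- a * z ≠ 0
    have haz : a * z ≠ 0 := by
      intro h0
      have hza : z * a = 0 := by rw [hz a]; exact h0
      have h2 : z * ((b * y) * a) + z * z = z * (a * (b * y)) := by
        rw [← mul_add, h1]
      have e1 : z * ((b * y) * a) = 0 := by
        calc z * ((b * y) * a) = (z * (b * y)) * a := (mul_assoc _ _ _).symm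
          _ = ((b * y) * z) * a := by rw [hz (b * y)]
          _ = (b * y) * (z * a) := mul_assoc _ _ _
          _ = 0 := by rw [hza, mul_zero]
      have e2 : z * (a * (b * y)) = 0 := by
        rw [← mul_assoc, hza, zero_mul]
      rw [e1, e2, zero_add] at h2
      exact hz0 (hnil z 2 (by norm_num) (by rw [pow_two]; exact h2))
    obtain ⟨y', z', hy'0, hz'0, hy', hz', hazy⟩ := hce (a * z) haz
    -- multiply h1 on the right by z * y'
    have h3 : (b * y) * a * (z * y') + z * (z * y') = a * (b * y) * (z * y') := by
      rw [← add_mul, h1]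
    have hLHS : (b * y) * a * (z * y') = (b * y) * z' := by
      calc (b * y) * a * (z * y') = (b * y) * (a * (z * y')) := mul_assoc _ _ _
        _ = (b * y) * (a * z * y') := by rw [← mul_assoc a z y']
        _ = (b * y) * z' := by rw [hazy]
    have hcomm : (b * y) * (z * y') = (z * y') * (b * y) := by
      calc (b * y) * (z * y') = ((b * y) * z) * y' := (mul_assoc _ _ _).symm
        _ = (z * (b * y)) * y' := by rw [hz (b * y)]
        _ = z * ((b * y) * y') := mul_assoc _ _ _
        _ = z * (y' * (b * y)) := by rw [← hy' (b * y)]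
        _ = (z * y') * (b * y) := (mul_assoc _ _ _).symm
    have hR : a * (b * y) * (z * y') = (b * y) * z' := by
      calc a * (b * y) * (z * y') = a * ((b * y) * (z * y')) := mul_assoc _ _ _
        _ = a * ((z * y') * (b * y)) := by rw [hcomm]
        _ = (a * (z * y')) * (b * y) := (mul_assoc _ _ _).symm
        _ = (a * z * y') * (b * y) := by rw [← mul_assoc a z y']
        _ = z' * (b * y) := by rw [hazy]
        _ = (b * y) * z' := hz' (b * y)
    rw [hLHS, hR] at h3
    have h4 : z * (z * y') + (b * y) * z' = 0 + (b * y) * z' := by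
      rw [zero_add, add_comm]
      exact h3
    have h5 : z * (z * y') = 0 := hcanc _ _ _ h4
    have h6 : (z * y') ^ 2 = 0 := by
      calc (z * y') ^ 2 = (z * y') * (z * y') := pow_two _
        _ = z * (y' * (z * y')) := mul_assoc _ _ _
        _ = z * ((z * y') * y') := by rw [hy' (z * y')]
        _ = z * (z * (y' * y')) := by rw [mul_assoc z y' y']
        _ = (z * (z * y')) * y' := by rw [← mul_assoc z y' y', ← mul_assoc, ← mul_assoc, mul_assoc z z y']
        _ = 0 := by rw [h5, zero_mul]
    have h7 : z * y' = 0 := hnil _ 2 (by norm_num) h6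
    have h8 : z' = 0 := by
      rw [← hazy, mul_assoc, h7, mul_zero]
    exact hz'0 h8
  intro a b
  by_cases hne : a * b = b * a
  · exact hne
  obtain ⟨x, hx | hx⟩ := hsub (a * b) (b * a) hne
  · have hx0 := key b a x hx
    rw [hx0, add_zero] at hx
    exact hx
  · have hx0 := key a b x hx
    rw [hx0, add_zero] at hx
    exact hx.symm
end

section
/- Let S be an additively cancellative centrally essential semiring, and let e ∈ S be an idempotent (e² = e) that is complemented, i.e., there exists an idempotent f ∈ S with e + f = 1. Then e is central: ex = xe for every x ∈ S. -/
/-- In an additively cancellative centrally essential semiring,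
every complemented idempotent is central. -/
theorem stmt_8 {S : Type*} [Semiring S]
    (hcanc : ∀ x y z : S, x + z = y + z → x = y)
    (hce : ∀ x : S, x ≠ 0 → ∃ y z : S, y ≠ 0 ∧ z ≠ 0 ∧
      (∀ s, y * s = s * y) ∧ (∀ s, z * s = s * z) ∧ x * y = z)
    (e : S) (he : e * e = e)
    (hcompl : ∃ f : S, f * f = f ∧ e + f = 1) :
    ∀ x : S, e * x = x * e := by
  obtain ⟨f, hf, hef1⟩ := hcompl
  -- e * f = 0 and f * e = 0
  have hef : e * f = 0 := by
    apply hcanc _ _ e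
    have : e * (e + f) = e * 1 := by rw [hef1]
    rw [mul_add, he, mul_one] at this
    rw [add_comm, this, zero_add]
  have hfe : f * e = 0 := by
    apply hcanc _ _ e
    have : (e + f) * e = 1 * e := by rw [hef1]
    rw [add_mul, he, one_mul] at this
    rw [add_comm, this, zero_add]
  -- main lemma: for orthogonal complementary idempotents u, v, u*a*v = 0
  have main : ∀ u v : S, u * u = u → v * v = v → v * u = 0 →
      ∀ a : S, u * a * v = 0 := by
    intro u v hu hv hvu a
    by_contra hne
    obtain ⟨y, z, hy0, hz0, hyc, hzc, hyz⟩ := hce _ hne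
    have hz1 : u * z = z := by
      rw [← hyz]
      calc u * (u * a * v * y) = (u * u) * a * v * y := by simp only [← mul_assoc]
        _ = u * a * v * y := by rw [hu]
    have hz2 : z * v = z := by
      rw [← hyz]
      calc u * a * v * y * v = u * a * v * (y * v) := by rw [mul_assoc]
        _ = u * a * v * (v * y) := by rw [hyc]
        _ = u * a * (v * v) * y := by rw [← mul_assoc, ← mul_assoc, mul_assoc (u*a)]
        _ = u * a * v * y := by rw [hv]
    have : z = 0 := by
      calc z = u * z := hz1.symm
        _ = z * u := (hzc u).symm
        _ = (z * v) * u := by rw [hz2]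
        _ = z * (v * u) := by rw [mul_assoc]
        _ = 0 := by rw [hvu, mul_zero]
    exact hz0 this
  intro x
  have h1 : e * x * f = 0 := main e f he hf hfe x
  have h2 : f * x * e = 0 := main f e hf he hef x
  have l1 : e * x = e * x * e := by
    have : e * x * (e + f) = e * x * 1 := by rw [hef1]
    rw [mul_add, h1, add_zero, mul_one] at this
    exact this.symm
  have l2 : x * e = e * x * e := by
    have : (e + f) * (x * e) = 1 * (x * e) := by rw [hef1]
    rw [add_mul, one_mul, ← mul_assoc, ← mul_assoc, h2, add_zero] at this
    exact this.symm
  rw [l1, l2]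
end

section
/- Let S be an additively cancellative semiring with 1 ≠ 0 and let n ≥ 2. Then the semiring Mₙ(S) of all n × n matrices over S is not centrally essential. -/
/-- For an additively cancellative semiring `S` with `1 ≠ 0` and `n ≥ 2`,
the matrix semiring `Mₙ(S)` is not centrally essential. -/
theorem stmt_10 {S : Type*} [Semiring S] (h1 : (1 : S) ≠ 0)
    (hcanc : ∀ x y z : S, x + z = y + z → x = y)
    (n : ℕ) (hn : 2 ≤ n) :
    ¬ (∀ x : Matrix (Fin n) (Fin n) S, x ≠ 0 →
        ∃ y z : Matrix (Fin n) (Fin n) S, y ≠ 0 ∧ z ≠ 0 ∧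
          (∀ s, y * s = s * y) ∧ (∀ s, z * s = s * z) ∧ x * y = z) := by
  intro H
  set i0 : Fin n := ⟨0, by omega⟩ with hi0
  set i1 : Fin n := ⟨1, by omega⟩ with hi1
  have hne : i0 ≠ i1 := by simp [hi0, hi1, Fin.ext_iff]
  -- any central matrix has zero off-diagonal entries
  have hoff : ∀ w : Matrix (Fin n) (Fin n) S, (∀ s, w * s = s * w) →
      ∀ i j : Fin n, i ≠ j → w i j = 0 := by
    intro w hw i j hij
    have := congrFun (congrFun (hw (Matrix.single j j 1)) i) j
    simp [Matrix.mul_apply, Matrix.single, Finset.sum_ite_eq,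
      Finset.sum_ite_eq', hij, hij.symm] at this
    simpa [hij] using this
  set x : Matrix (Fin n) (Fin n) S := Matrix.single i0 i1 1 with hx
  have hx0 : x ≠ 0 := by
    intro h
    have := congrFun (congrFun h i0) i1
    simp [hx, Matrix.single] at this
    exact h1 this
  obtain ⟨y, z, hy0, hz0, hyc, hzc, hxyz⟩ := H x hx0
  -- z 0 0 = y 1 0 = 0
  have hz00 : z i0 i0 = 0 := by
    have := congrFun (congrFun hxyz i0) i0
    rw [Matrix.mul_apply] at this
    have hy10 : y i1 i0 = 0 := hoff y hyc i1 i0 hne.symm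
    simp [hx, Matrix.single, Finset.sum_ite_eq, hy10] at this
    exact this.symm
  -- all diagonal entries of z vanish
  have hdiag : ∀ i : Fin n, z i i = 0 := by
    intro i
    have := congrFun (congrFun (hzc (Matrix.single i i0 1)) i) i0
    simp [Matrix.mul_apply, Matrix.single, Finset.sum_ite_eq,
      Finset.sum_ite_eq'] at this
    rw [this, hz00]
  apply hz0
  ext i j
  rcases eq_or_ne i j with rfl | hij
  · simp [hdiag i]
  · simp [hoff z hzc i j hij]
end

section
/- Let S be an additively cancellative semiring with 1 ≠ 0 and let n ≥ 2. Then the semiring Tₙ(S) of all upper triangular n × n matrices over S (matrices M with Mᵢⱼ = 0 whenever i > j, forming a subsemiring of Mₙ(S)) is not centrally essential. -/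
/-- The subsemiring of upper triangular `n × n` matrices over a semiring `S`. -/
def upperTriangularSubsemiring (S : Type*) [Semiring S] (n : ℕ) :
    Subsemiring (Matrix (Fin n) (Fin n) S) where
  carrier := {M | ∀ i j : Fin n, j < i → M i j = 0}
  zero_mem' := by intro i j _; rfl
  one_mem' := by
    intro i j hij
    exact Matrix.one_apply_ne (ne_of_gt hij)
  add_mem' := by
    intro M N hM hN i j hij
    simp [Matrix.add_apply, hM i j hij, hN i j hij]
  mul_mem' := by
    intro M N hM hN i j hij
    rw [Matrix.mul_apply]
    refine Finset.sum_eq_zero fun k _ => ?_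
    rcases lt_or_ge k i with hk | hk
    · rw [hM i k hk, zero_mul]
    · rw [hN k j (lt_of_lt_of_le hij hk), mul_zero]

/-- For an additively cancellative semiring `S` with `1 ≠ 0` and `n ≥ 2`,
the semiring `Tₙ(S)` of upper triangular matrices is not centrally essential. -/
theorem stmt_11 {S : Type*} [Semiring S] (h1 : (1 : S) ≠ 0)
    (hcanc : ∀ x y z : S, x + z = y + z → x = y)
    (n : ℕ) (hn : 2 ≤ n) :
    ¬ (∀ x : upperTriangularSubsemiring S n, x ≠ 0 →
        ∃ y z : upperTriangularSubsemiring S n, y ≠ 0 ∧ z ≠ 0 ∧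
          (∀ s, y * s = s * y) ∧ (∀ s, z * s = s * z) ∧ x * y = z) := by
  intro h
  have h0 : (0:ℕ) < n := by omega
  have h1n : (1:ℕ) < n := by omega
  set i0 : Fin n := ⟨0, h0⟩ with hi0
  set i1 : Fin n := ⟨1, h1n⟩ with hi1
  have hlt : i0 < i1 := by simp [hi0, hi1, Fin.lt_def]
  -- x = E₀₁
  have hxmem : Matrix.single i0 i1 (1:S) ∈ upperTriangularSubsemiring S n := by
    intro a b hab
    apply Matrix.single_apply_of_ne
    rintro ⟨rfl, rfl⟩
    exact absurd hab (not_lt.2 hlt.le)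
  set x : upperTriangularSubsemiring S n := ⟨_, hxmem⟩ with hx
  have hxne : x ≠ 0 := by
    intro hc
    have := congrArg (fun m : upperTriangularSubsemiring S n => (m : Matrix (Fin n) (Fin n) S) i0 i1) hc
    simp [hx, Matrix.single_apply_same] at this
    exact h1 this
  obtain ⟨y, z, hy, hz, hyc, hzc, hxyz⟩ := h x hxne
  -- E₀₀
  have hemem : Matrix.single i0 i0 (1:S) ∈ upperTriangularSubsemiring S n := by
    intro a b hab
    apply Matrix.single_apply_of_ne
    rintro ⟨rfl, rfl⟩
    exact absurd hab (lt_irrefl _)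
  set e : upperTriangularSubsemiring S n := ⟨_, hemem⟩ with he
  have hzmat := congrArg (Subtype.val : upperTriangularSubsemiring S n → Matrix (Fin n) (Fin n) S) (hzc e)
  -- z = 0
  apply hz
  apply Subtype.ext
  ext a b
  show (z : Matrix (Fin n) (Fin n) S) a b = 0
  by_cases ha : a = i0
  · subst ha
    by_cases hb : b = i0
    · subst hb
      have : (z : Matrix (Fin n) (Fin n) S) i0 i0 = (Matrix.single i0 i1 (1:S) * (y : Matrix (Fin n) (Fin n) S)) i0 i0 := by
        rw [← congrArg (fun m : upperTriangularSubsemiring S n => (m : Matrix (Fin n) (Fin n) S) i0 i0) hxyz]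
        rfl
      rw [this, Matrix.single_mul_apply_same, one_mul]
      exact y.2 i1 i0 hlt
    · have := congrArg (fun m => m i0 b) hzmat
      simp only [he] at this
      rw [show ((z * e : upperTriangularSubsemiring S n) : Matrix (Fin n) (Fin n) S) = (z : Matrix (Fin n) (Fin n) S) * Matrix.single i0 i0 (1:S) from rfl,
          show ((e * z : upperTriangularSubsemiring S n) : Matrix (Fin n) (Fin n) S) = Matrix.single i0 i0 (1:S) * (z : Matrix (Fin n) (Fin n) S) from rfl] at this
      rw [Matrix.mul_single_apply_of_ne (hbj := hb),
          Matrix.single_mul_apply_same, one_mul] at this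
      exact this.symm
  · have : (z : Matrix (Fin n) (Fin n) S) a b = (Matrix.single i0 i1 (1:S) * (y : Matrix (Fin n) (Fin n) S)) a b := by
      rw [← congrArg (fun m : upperTriangularSubsemiring S n => (m : Matrix (Fin n) (Fin n) S) a b) hxyz]
      rfl
    rw [this, Matrix.single_mul_apply_of_ne (h := ha)]
end

section
/- Let S be a centrally essential semiring without zero-divisors, let R be a ring, and let f : S → R be an injective semiring homomorphism such that every element of R is of the form f(x) − f(y) for some x, y ∈ S. If R has no zero-divisors (for all a, b ∈ R, ab = 0 implies a = 0 or b = 0), then S is commutative. -/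
/-- Let `S` be a centrally essential semiring without zero-divisors and let
`R` be a ring of differences of `S`. If `R` has no zero-divisors, then `S` is commutative. -/
theorem stmt_13 {S R : Type*} [Semiring S] [Ring R] (f : S →+* R)
    (hce : ∀ x : S, x ≠ 0 → ∃ y z : S, y ≠ 0 ∧ z ≠ 0 ∧
      (∀ s, y * s = s * y) ∧ (∀ s, z * s = s * z) ∧ x * y = z)
    (hS : ∀ a b : S, a * b = 0 → a = 0 ∨ b = 0)
    (hinj : Function.Injective f)
    (hdiff : ∀ r : R, ∃ x y : S, r = f x - f y)
    (hR : ∀ a b : R, a * b = 0 → a = 0 ∨ b = 0) :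
    ∀ a b : S, a * b = b * a := by
  intro a b
  by_cases ha : a = 0
  · simp [ha]
  obtain ⟨y, z, hy, hz, hyc, hzc, hay⟩ := hce a ha
  -- f y and f z are central in R
  have hyR : ∀ r : R, f y * r = r * f y := by
    intro r
    obtain ⟨u, v, rfl⟩ := hdiff r
    simp only [mul_sub, sub_mul, ← f.map_mul, hyc u, hyc v]
  have hzR : ∀ r : R, f z * r = r * f z := by
    intro r
    obtain ⟨u, v, rfl⟩ := hdiff r
    simp only [mul_sub, sub_mul, ← f.map_mul, hzc u, hzc v]
  have key : (f a * f b - f b * f a) * f y = 0 := by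
    have h1 : f a * f y = f z := by rw [← f.map_mul, hay]
    have h2 : f b * f a * f y = f b * f z := by rw [mul_assoc, h1]
    have h3 : f a * f b * f y = f z * f b := by
      rw [mul_assoc, ← hyR (f b), ← mul_assoc, h1]
    rw [sub_mul, h2, h3, hzR (f b), sub_self]
  have hfy : f y ≠ 0 := fun h => hy (hinj (by rw [h, f.map_zero]))
  rcases hR _ _ key with h | h
  · exact hinj (by rw [f.map_mul, f.map_mul, sub_eq_zero.mp h])
  · exact absurd h hfy
end

section
/- Let S be a centrally essential semiring that is left multiplicatively cancellative: for every x ∈ S with x ≠ 0 and all y, z ∈ S, xy = xz implies y = z. Then S is commutative. -/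
/-- A left multiplicatively cancellative centrally essential semiring is
commutative. -/
theorem stmt_15 {S : Type*} [Semiring S]
    (hce : ∀ x : S, x ≠ 0 → ∃ y z : S, y ≠ 0 ∧ z ≠ 0 ∧
      (∀ s, y * s = s * y) ∧ (∀ s, z * s = s * z) ∧ x * y = z)
    (hlc : ∀ x : S, x ≠ 0 → ∀ y z : S, x * y = x * z → y = z) :
    ∀ a b : S, a * b = b * a := by
  intro a b
  by_cases ha : a = 0
  · simp [ha]
  obtain ⟨y, z, hy, hz, hyc, hzc, hxy⟩ := hce a ha
  apply hlc y hy
  calc y * (a * b) = a * y * b := by rw [← hyc, mul_assoc]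
    _ = z * b := by rw [hxy]
    _ = b * z := hzc b
    _ = b * (a * y) := by rw [hxy]
    _ = b * a * y := by rw [mul_assoc]
    _ = y * (b * a) := (hyc _).symm
end

section
/- Let S be a centrally essential semiring that is right multiplicatively cancellative: for every x ∈ S with x ≠ 0 and all y, z ∈ S, yx = zx implies y = z. Then S is commutative. -/
/-- A right multiplicatively cancellative centrally essential semiring is
commutative. -/
theorem stmt_16 {S : Type*} [Semiring S]
    (hce : ∀ x : S, x ≠ 0 → ∃ y z : S, y ≠ 0 ∧ z ≠ 0 ∧
      (∀ s, y * s = s * y) ∧ (∀ s, z * s = s * z) ∧ x * y = z)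
    (hrc : ∀ x : S, x ≠ 0 → ∀ y z : S, y * x = z * x → y = z) :
    ∀ a b : S, a * b = b * a := by
  intro a b
  by_cases ha : a = 0
  · simp [ha]
  obtain ⟨y, z, hy, hz, hyc, hzc, hay⟩ := hce a ha
  apply hrc y hy
  calc a * b * y = a * (b * y) := by rw [mul_assoc]
    _ = a * (y * b) := by rw [hyc]
    _ = a * y * b := by rw [mul_assoc]
    _ = z * b := by rw [hay]
    _ = b * z := hzc b
    _ = b * (a * y) := by rw [hay]
    _ = b * a * y := by rw [mul_assoc]
end

section
/- Every centrally essential division semiring is commutative; that is, if S is a division semiring (a semiring with 1 ≠ 0 in which every non-zero element has a multiplicative inverse) that is centrally essential, then xy = yx for all x, y ∈ S. -/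
/-- Every centrally essential division semiring is commutative. -/
theorem stmt_17 {S : Type*} [Semiring S] (h1 : (1 : S) ≠ 0)
    (hinv : ∀ x : S, x ≠ 0 → ∃ y : S, x * y = 1 ∧ y * x = 1)
    (hce : ∀ x : S, x ≠ 0 → ∃ y z : S, y ≠ 0 ∧ z ≠ 0 ∧
      (∀ s, y * s = s * y) ∧ (∀ s, z * s = s * z) ∧ x * y = z) :
    ∀ x y : S, x * y = y * x := by
  intro a b
  by_cases ha : a = 0
  · simp [ha]
  obtain ⟨y, z, hy, hz, hyc, hzc, hxy⟩ := hce a ha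
  obtain ⟨w, hw1, hw2⟩ := hinv y hy
  have hwc : ∀ s : S, w * s = s * w := by
    intro s
    calc w * s = w * s * (y * w) := by rw [hw1, mul_one]
    _ = w * (s * y) * w := by rw [mul_assoc, mul_assoc, mul_assoc]
    _ = w * (y * s) * w := by rw [hyc s]
    _ = (w * y) * (s * w) := by rw [mul_assoc, mul_assoc, mul_assoc]
    _ = s * w := by rw [hw2, one_mul]
  have haz : a = z * w := by
    calc a = a * (y * w) := by rw [hw1, mul_one]
    _ = (a * y) * w := by rw [mul_assoc]
    _ = z * w := by rw [hxy]
  calc a * b = z * (w * b) := by rw [haz, mul_assoc]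
  _ = z * (b * w) := by rw [hwc]
  _ = (z * b) * w := by rw [mul_assoc]
  _ = (b * z) * w := by rw [hzc]
  _ = b * a := by rw [mul_assoc, ← haz]
end

section
/- Let S be a centrally essential semiring and let a ∈ S be a left zero-divisor, i.e., there exists b ∈ S with b ≠ 0 and ab = 0. Then a is also a right zero-divisor: there exists c ∈ S with c ≠ 0 and ca = 0. -/
/-- In a centrally essential semiring, every left zero-divisor is a right
zero-divisor. -/
theorem stmt_18 {S : Type*} [Semiring S]
    (hce : ∀ x : S, x ≠ 0 → ∃ y z : S, y ≠ 0 ∧ z ≠ 0 ∧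
      (∀ s, y * s = s * y) ∧ (∀ s, z * s = s * z) ∧ x * y = z)
    (a : S) (hl : ∃ b : S, b ≠ 0 ∧ a * b = 0) :
    ∃ c : S, c ≠ 0 ∧ c * a = 0 := by
  obtain ⟨b, hb, hab⟩ := hl
  obtain ⟨y, z, hy, hz, hyc, hzc, hby⟩ := hce b hb
  refine ⟨z, hz, ?_⟩
  rw [hzc a, ← hby, ← mul_assoc, hab, zero_mul]
end

section
/- Let S be a centrally essential semiring and let a ∈ S be a right zero-divisor, i.e., there exists c ∈ S with c ≠ 0 and ca = 0. Then a is also a left zero-divisor: there exists b ∈ S with b ≠ 0 and ab = 0. -/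
/-- In a centrally essential semiring, every right zero-divisor is a left
zero-divisor. -/
theorem stmt_19 {S : Type*} [Semiring S]
    (hce : ∀ x : S, x ≠ 0 → ∃ y z : S, y ≠ 0 ∧ z ≠ 0 ∧
      (∀ s, y * s = s * y) ∧ (∀ s, z * s = s * z) ∧ x * y = z)
    (a : S) (hr : ∃ c : S, c ≠ 0 ∧ c * a = 0) :
    ∃ b : S, b ≠ 0 ∧ a * b = 0 := by
  obtain ⟨c, hc, hca⟩ := hr
  obtain ⟨y, z, hy, hz, hyc, hzc, hcy⟩ := hce c hc
  refine ⟨z, hz, ?_⟩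
  calc a * z = z * a := (hzc a).symm
    _ = c * y * a := by rw [hcy]
    _ = c * (a * y) := by rw [mul_assoc, hyc]
    _ = c * a * y := by rw [mul_assoc]
    _ = 0 := by rw [hca, zero_mul]
end
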